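/- arXiv:0801.2089 — 2 statements merged into one kernel-verified Lean document; each statement's English description precedes it below -/
import Mathlib

section
/- Let Δ, N be positive integers, p an odd prime with p ∤ ΔN, a ∈ ℤ with p ∣ a²ΔN + 1, q a prime with q ∤ Δp, and ω ∈ ℤ_q with ω² = p. Let c ∈ ℤ satisfy 2c − (p − ω) ∈ 2q·ℤ_q. Then the ℤ-submodule of ℍ[ℚ,−ΔN,p] spanned by f₁ = e₁, f₂ = e₂, f₃ = e₃ − c·e₄, f₄ = q·e₄ equals the set of h ∈ R(N) such that the lower-left entry of φ(h), h viewed in ℍ[ℚ_q,−ΔN,p], lies in qN·ℤ_q; this subgroup is the Eichler order R(Nq) of level Nq inside R(N). -/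
open Quaternion

/-- Membership in the span of four elements, concretely. -/
lemma mem_span_four' {Δ N p : ℕ} (a b c d x : ℍ[ℚ, -((Δ : ℚ) * N), (p : ℚ)]) :
    x ∈ Submodule.span ℤ ({a, b, c, d} : Set ℍ[ℚ, -((Δ : ℚ) * N), (p : ℚ)]) ↔
      ∃ k l m n : ℤ, x = k • a + l • b + m • c + n • d := by
  simp only [show ({a, b, c, d} : Set ℍ[ℚ, -((Δ : ℚ) * N), (p : ℚ)]) =
      insert a (insert b (insert c {d})) from rfl,
    Submodule.mem_span_insert, Submodule.mem_span_singleton]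
  constructor
  · rintro ⟨k, _, ⟨l, _, ⟨m, _, ⟨n, rfl⟩, rfl⟩, rfl⟩, rfl⟩
    exact ⟨k, l, m, n, by simp only [add_assoc]⟩
  · rintro ⟨k, l, m, n, rfl⟩
    exact ⟨k, _, ⟨l, _, ⟨m, _, ⟨n, rfl⟩, rfl⟩, rfl⟩, by simp only [add_assoc]⟩

/-- The coefficient-wise inclusion `ℍ[ℚ, -ΔN, p] → ℍ[ℚ_q, -ΔN, p]`. -/
noncomputable def toLoc (q : ℕ) [Fact q.Prime] (Δ N p : ℕ) :
    ℍ[ℚ, -((Δ : ℚ) * N), (p : ℚ)] → ℍ[ℚ_[q], -((Δ : ℚ_[q]) * N), (p : ℚ_[q])] := fun h =>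
  ⟨(h.re : ℚ_[q]), (h.imI : ℚ_[q]), (h.imJ : ℚ_[q]), (h.imK : ℚ_[q])⟩

/-- The `ℚ_q`-linear map `φ : ℍ[ℚ_q, -ΔN, p] → M₂(ℚ_q)` sending `α + βi + γj + δk` to
`!![α − γω, β + δω; ΔN(−β + δω), α + γω]`, where `ω² = p` in `ℤ_q`. -/
noncomputable def phi (q : ℕ) [Fact q.Prime] (Δ N p : ℕ) (ω : ℤ_[q]) :
    ℍ[ℚ_[q], -((Δ : ℚ_[q]) * N), (p : ℚ_[q])] → Matrix (Fin 2) (Fin 2) ℚ_[q] := fun h =>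
  !![h.re - h.imJ * (ω : ℚ_[q]), h.imI + h.imK * (ω : ℚ_[q]);
     (Δ : ℚ_[q]) * N * (-h.imI + h.imK * (ω : ℚ_[q])), h.re + h.imJ * (ω : ℚ_[q])]

/-- Hashimoto's Eichler order `R(N)` of level `N` in `ℍ[ℚ, -ΔN, p]`. -/
def RN (Δ N p : ℕ) (a : ℤ) : Submodule ℤ ℍ[ℚ, -((Δ : ℚ) * N), (p : ℚ)] :=
  Submodule.span ℤ
    {(1 : ℍ[ℚ, -((Δ : ℚ) * N), (p : ℚ)]), ⟨1/2, 0, 1/2, 0⟩, ⟨0, 1/2, 0, 1/2⟩,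
      ⟨0, 0, (a : ℚ) * Δ * N / p, 1 / (p : ℚ)⟩}

/-- `f₁ = e₁`, `f₂ = e₂`, `f₃ = e₃ − c·e₄`, `f₄ = q·e₄` is a basis of the Eichler order
`R(Nq)` inside `R(N)`. -/
theorem stmt_10 (Δ N : ℕ) (hΔ : 0 < Δ) (hN : 0 < N)
    (p : ℕ) (hp : p.Prime) (hp2 : p ≠ 2) (hpΔN : ¬ p ∣ Δ * N)
    (a : ℤ) (ha : (p : ℤ) ∣ a ^ 2 * Δ * N + 1)
    (q : ℕ) [Fact q.Prime] (hq : ¬ q ∣ Δ * p)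
    (ω : ℤ_[q]) (hω : ω ^ 2 = (p : ℤ_[q]))
    (c : ℤ) (hc : (2 * q : ℤ_[q]) ∣ ((2 * c : ℤ_[q]) - ((p : ℤ_[q]) - ω))) :
    (Submodule.span ℤ
        {(1 : ℍ[ℚ, -((Δ : ℚ) * N), (p : ℚ)]),
         (⟨1/2, 0, 1/2, 0⟩ : ℍ[ℚ, -((Δ : ℚ) * N), (p : ℚ)]),
         (⟨0, 1/2, 0, 1/2⟩ : ℍ[ℚ, -((Δ : ℚ) * N), (p : ℚ)]) -
           c • (⟨0, 0, (a : ℚ) * Δ * N / p, 1 / (p : ℚ)⟩ : ℍ[ℚ, -((Δ : ℚ) * N), (p : ℚ)]),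
         (q : ℤ) • (⟨0, 0, (a : ℚ) * Δ * N / p, 1 / (p : ℚ)⟩ : ℍ[ℚ, -((Δ : ℚ) * N), (p : ℚ)])} :
      Set ℍ[ℚ, -((Δ : ℚ) * N), (p : ℚ)]) =
      {h | h ∈ RN Δ N p a ∧
        ∃ z : ℤ_[q], phi q Δ N p ω (toLoc q Δ N p h) 1 0 =
          (q : ℚ_[q]) * (N : ℚ_[q]) * (z : ℚ_[q])} := by
  obtain ⟨t, ht⟩ := hc
  have hqΔ : ¬ q ∣ Δ := fun hd => hq (hd.mul_right p)
  have hqp : ¬ q ∣ p := fun hd => hq (hd.mul_left Δ)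
  have hN0 : (N : ℚ_[q]) ≠ 0 := Nat.cast_ne_zero.mpr hN.ne'
  have hp0 : (p : ℚ_[q]) ≠ 0 := Nat.cast_ne_zero.mpr hp.pos.ne'
  have h2cast : ((2 : ℤ_[q]) : ℚ_[q]) = 2 := by
    rw [show (2 : ℤ_[q]) = ((2 : ℕ) : ℤ_[q]) by norm_num, PadicInt.coe_natCast]
    norm_num
  have hunit_p : IsUnit (p : ℤ_[q]) := by
    rw [PadicInt.isUnit_iff]
    refine le_antisymm (PadicInt.norm_le_one _) ?_
    by_contra hlt
    push_neg at hlt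
    rw [show ((p : ℤ_[q])) = (((p : ℤ) : ℤ_[q])) by push_cast; ring] at hlt
    exact hqp (Int.natCast_dvd_natCast.mp ((PadicInt.norm_int_lt_one_iff_dvd _).mp hlt))
  have hunit_Δ : IsUnit (Δ : ℤ_[q]) := by
    rw [PadicInt.isUnit_iff]
    refine le_antisymm (PadicInt.norm_le_one _) ?_
    by_contra hlt
    push_neg at hlt
    rw [show ((Δ : ℤ_[q])) = (((Δ : ℤ) : ℤ_[q])) by push_cast; ring] at hlt
    exact hqΔ (Int.natCast_dvd_natCast.mp ((PadicInt.norm_int_lt_one_iff_dvd _).mp hlt))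
  have hunit_ω : IsUnit ω := by
    refine isUnit_of_mul_isUnit_left (y := ω) ?_
    rw [← sq, hω]; exact hunit_p
  have hω0 : (ω : ℚ_[q]) ≠ 0 := by
    intro h0
    rw [PadicInt.coe_eq_zero] at h0
    rw [h0] at hunit_ω
    exact not_isUnit_zero hunit_ω
  have hdvd : ∀ m : ℤ, ((q : ℤ_[q]) ∣ (m : ℤ_[q])) ↔ (q : ℤ) ∣ m := fun m => by
    rw [← PadicInt.norm_int_lt_one_iff_dvd, PadicInt.norm_lt_one_iff_dvd]
  have hω2 : (ω : ℚ_[q]) * (ω : ℚ_[q]) = (p : ℚ_[q]) := by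
    have h1 := congrArg (fun x : ℤ_[q] => (x : ℚ_[q])) hω
    push_cast at h1
    linear_combination h1
  have hpω : (p : ℚ_[q]) - (ω : ℚ_[q]) = 2 * (((c : ℤ_[q]) : ℚ_[q]) - (q : ℚ_[q]) * (t : ℤ_[q])) := by
    have h1 := congrArg (fun x : ℤ_[q] => (x : ℚ_[q])) ht
    push_cast [h2cast] at h1
    push_cast
    linear_combination -h1
  -- the key local-arithmetic equivalence
  have key : ∀ x₃ x₄ : ℤ,
      (∃ z : ℤ_[q], (Δ : ℚ_[q]) * (N : ℚ_[q]) *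
          (-((x₃ : ℚ_[q])/2) + ((x₃ : ℚ_[q])/2 + (x₄ : ℚ_[q])/(p : ℚ_[q])) * (ω : ℚ_[q]))
        = (q : ℚ_[q]) * (N : ℚ_[q]) * (z : ℚ_[q])) ↔ (q : ℤ) ∣ c * x₃ + x₄ := by
    intro x₃ x₄
    have hEω : (Δ : ℚ_[q]) * (N : ℚ_[q]) *
          (-((x₃ : ℚ_[q])/2) + ((x₃ : ℚ_[q])/2 + (x₄ : ℚ_[q])/(p : ℚ_[q])) * (ω : ℚ_[q])) * (ω : ℚ_[q])
        = (N : ℚ_[q]) * (((Δ : ℤ_[q]) * ((x₃ : ℤ_[q]) * ((c : ℤ_[q]) - (q : ℤ_[q]) * t) + (x₄ : ℤ_[q])) : ℤ_[q]) : ℚ_[q]) := by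
      have hpω' := hpω
      push_cast at hpω' ⊢
      field_simp
      linear_combination ((Δ:ℚ_[q])*((x₃:ℚ_[q])*p + 2*(x₄:ℚ_[q])))*hω2 +
        ((Δ:ℚ_[q])*(p:ℚ_[q])*(x₃:ℚ_[q]))*hpω'
    constructor
    · rintro ⟨z, hz⟩
      have h3 : ((((Δ : ℤ_[q]) * ((x₃ : ℤ_[q]) * ((c : ℤ_[q]) - (q : ℤ_[q]) * t) + (x₄ : ℤ_[q])) : ℤ_[q])) : ℚ_[q])
          = (((q : ℤ_[q]) * (z * ω) : ℤ_[q]) : ℚ_[q]) := by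
        apply mul_left_cancel₀ hN0
        rw [← hEω, hz]
        push_cast
        ring
      have h2 : ((Δ : ℤ_[q]) * ((x₃ : ℤ_[q]) * ((c : ℤ_[q]) - (q : ℤ_[q]) * t) + (x₄ : ℤ_[q])) : ℤ_[q])
          = (q : ℤ_[q]) * (z * ω) := Subtype.coe_injective h3
      have h4 : (q : ℤ_[q]) ∣ (Δ : ℤ_[q]) * ((c * x₃ + x₄ : ℤ) : ℤ_[q]) := by
        refine ⟨z * ω + (Δ : ℤ_[q]) * (x₃ : ℤ_[q]) * t, ?_⟩
        push_cast
        linear_combination h2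
      rw [hunit_Δ.dvd_mul_left] at h4
      exact (hdvd _).mp h4
    · rintro ⟨m, hm⟩
      obtain ⟨u, hu⟩ := hunit_ω.exists_right_inv
      refine ⟨(Δ : ℤ_[q]) * ((m : ℤ_[q]) - (x₃ : ℤ_[q]) * t) * u, ?_⟩
      apply mul_right_cancel₀ hω0
      rw [hEω]
      have hu' : (ω : ℚ_[q]) * (u : ℚ_[q]) = 1 := by
        have := congrArg (fun x : ℤ_[q] => (x : ℚ_[q])) hu
        push_cast at this
        exact this
      have hm' : ((c : ℚ_[q])) * (x₃ : ℚ_[q]) + (x₄ : ℚ_[q]) = (q : ℚ_[q]) * (m : ℚ_[q]) := by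
        exact_mod_cast congrArg (fun n : ℤ => (n : ℚ_[q])) hm
      push_cast
      linear_combination ((N : ℚ_[q]) * Δ) * hm' -
        ((q : ℚ_[q]) * N * Δ * ((m : ℚ_[q]) - (x₃ : ℚ_[q]) * (t : ℤ_[q]))) * hu'
  -- the matrix-entry computation for an arbitrary integer combination
  have comp : ∀ x₁ x₂ x₃ x₄ : ℤ,
      phi q Δ N p ω (toLoc q Δ N p
        (x₁ • 1 + x₂ • (⟨1/2, 0, 1/2, 0⟩ : ℍ[ℚ, -((Δ : ℚ) * N), (p : ℚ)])
          + x₃ • (⟨0, 1/2, 0, 1/2⟩ : ℍ[ℚ, -((Δ : ℚ) * N), (p : ℚ)])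
          + x₄ • (⟨0, 0, (a : ℚ) * Δ * N / p, 1 / (p : ℚ)⟩ : ℍ[ℚ, -((Δ : ℚ) * N), (p : ℚ)]))) 1 0
      = (Δ : ℚ_[q]) * (N : ℚ_[q]) *
          (-((x₃ : ℚ_[q])/2) + ((x₃ : ℚ_[q])/2 + (x₄ : ℚ_[q])/(p : ℚ_[q])) * (ω : ℚ_[q])) := by
    intro x₁ x₂ x₃ x₄
    simp only [← Int.cast_smul_eq_zsmul ℚ]
    simp only [phi, toLoc, QuaternionAlgebra.imI_add, QuaternionAlgebra.imK_add,
      QuaternionAlgebra.imI_smul, QuaternionAlgebra.imK_smul, QuaternionAlgebra.imI_one,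
      QuaternionAlgebra.imK_one, Matrix.cons_val', Matrix.cons_val_zero, Matrix.cons_val_one,
      Matrix.head_cons, Matrix.of_apply, Matrix.head_fin_const, Matrix.empty_val',
      Matrix.cons_val_fin_one, smul_eq_mul]
    push_cast
    ring
  ext h
  simp only [SetLike.mem_coe, Set.mem_setOf_eq, RN]
  rw [mem_span_four', mem_span_four']
  constructor
  · rintro ⟨y₁, y₂, y₃, y₄, rfl⟩
    have hrw : y₁ • (1 : ℍ[ℚ, -((Δ : ℚ) * N), (p : ℚ)])
        + y₂ • (⟨1/2, 0, 1/2, 0⟩ : ℍ[ℚ, -((Δ : ℚ) * N), (p : ℚ)])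
        + y₃ • ((⟨0, 1/2, 0, 1/2⟩ : ℍ[ℚ, -((Δ : ℚ) * N), (p : ℚ)]) -
            c • (⟨0, 0, (a : ℚ) * Δ * N / p, 1 / (p : ℚ)⟩ : ℍ[ℚ, -((Δ : ℚ) * N), (p : ℚ)]))
        + y₄ • ((q : ℤ) • (⟨0, 0, (a : ℚ) * Δ * N / p, 1 / (p : ℚ)⟩ : ℍ[ℚ, -((Δ : ℚ) * N), (p : ℚ)]))
      = y₁ • 1 + y₂ • (⟨1/2, 0, 1/2, 0⟩ : ℍ[ℚ, -((Δ : ℚ) * N), (p : ℚ)])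
        + y₃ • (⟨0, 1/2, 0, 1/2⟩ : ℍ[ℚ, -((Δ : ℚ) * N), (p : ℚ)])
        + (-c * y₃ + q * y₄) • (⟨0, 0, (a : ℚ) * Δ * N / p, 1 / (p : ℚ)⟩ :
            ℍ[ℚ, -((Δ : ℚ) * N), (p : ℚ)]) := by
      module
    rw [hrw]
    refine ⟨⟨y₁, y₂, y₃, -c * y₃ + q * y₄, rfl⟩, ?_⟩
    rw [comp y₁ y₂ y₃ (-c * y₃ + q * y₄)]
    exact (key y₃ (-c * y₃ + q * y₄)).mpr ⟨y₄, by ring⟩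
  · rintro ⟨⟨x₁, x₂, x₃, x₄, rfl⟩, hz⟩
    rw [comp x₁ x₂ x₃ x₄] at hz
    obtain ⟨m, hm⟩ := (key x₃ x₄).mp hz
    refine ⟨x₁, x₂, x₃, m, ?_⟩
    have hx₄ : x₄ = -c * x₃ + q * m := by linarith [hm]
    subst hx₄
    module
end

section
/- Let Δ, N be positive integers, p an odd prime with p ∤ ΔN, a ∈ ℤ with p ∣ a²ΔN + 1, q a prime with q ∤ Δp, and ω ∈ ℤ_q with ω² = p. Let c′ ∈ ℤ satisfy 2c′ − (p + ω) ∈ 2q·ℤ_q. Then the ℤ-submodule of ℍ[ℚ,−ΔN,p] spanned by g₁ = e₁, g₂ = e₂, g₃ = e₃ − c′·e₄, g₄ = q·e₄ equals the set of h ∈ R(N) such that the upper-right entry of φ(h), h viewed in ℍ[ℚ_q,−ΔN,p], lies in q·ℤ_q; this subgroup is the conjugate Eichler order δ_q R(Nq) δ_q⁻¹ inside R(N). -/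
open Quaternion

lemma mem_span_quad (Δ N p : ℕ) (s1 s2 s3 s4 x : ℍ[ℚ, -((Δ : ℚ) * N), (p : ℚ)]) :
    x ∈ Submodule.span ℤ ({s1, s2, s3, s4} : Set ℍ[ℚ, -((Δ : ℚ) * N), (p : ℚ)]) ↔
      ∃ a b c d : ℤ, x = a • s1 + b • s2 + c • s3 + d • s4 := by
  simp only [Submodule.mem_span_insert, Submodule.mem_span_singleton]
  constructor
  · rintro ⟨a, _, ⟨b, _, ⟨c, _, ⟨d, rfl⟩, rfl⟩, rfl⟩, rfl⟩
    exact ⟨a, b, c, d, by abel⟩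
  · rintro ⟨a, b, c, d, rfl⟩
    exact ⟨a, _, ⟨b, _, ⟨c, _, ⟨d, rfl⟩, rfl⟩, rfl⟩, by abel⟩


/-- `g₁ = e₁`, `g₂ = e₂`, `g₃ = e₃ − c′·e₄`, `g₄ = q·e₄` is a basis of the conjugate
Eichler order `δ_q R(Nq) δ_q⁻¹` inside `R(N)`. -/
theorem stmt_11 (Δ N : ℕ) (hΔ : 0 < Δ) (hN : 0 < N)
    (p : ℕ) (hp : p.Prime) (hp2 : p ≠ 2) (hpΔN : ¬ p ∣ Δ * N)
    (a : ℤ) (ha : (p : ℤ) ∣ a ^ 2 * Δ * N + 1)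
    (q : ℕ) [Fact q.Prime] (hq : ¬ q ∣ Δ * p)
    (ω : ℤ_[q]) (hω : ω ^ 2 = (p : ℤ_[q]))
    (c : ℤ) (hc : (2 * q : ℤ_[q]) ∣ ((2 * c : ℤ_[q]) - ((p : ℤ_[q]) + ω))) :
    (Submodule.span ℤ
        {(1 : ℍ[ℚ, -((Δ : ℚ) * N), (p : ℚ)]),
         (⟨1/2, 0, 1/2, 0⟩ : ℍ[ℚ, -((Δ : ℚ) * N), (p : ℚ)]),
         (⟨0, 1/2, 0, 1/2⟩ : ℍ[ℚ, -((Δ : ℚ) * N), (p : ℚ)]) -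
           c • (⟨0, 0, (a : ℚ) * Δ * N / p, 1 / (p : ℚ)⟩ : ℍ[ℚ, -((Δ : ℚ) * N), (p : ℚ)]),
         (q : ℤ) • (⟨0, 0, (a : ℚ) * Δ * N / p, 1 / (p : ℚ)⟩ : ℍ[ℚ, -((Δ : ℚ) * N), (p : ℚ)])} :
      Set ℍ[ℚ, -((Δ : ℚ) * N), (p : ℚ)]) =
      {h | h ∈ RN Δ N p a ∧
        ∃ z : ℤ_[q], phi q Δ N p ω (toLoc q Δ N p h) 0 1 =
          (q : ℚ_[q]) * (z : ℚ_[q])} := by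
  obtain ⟨t, ht⟩ := hc
  -- basic facts
  have hqp : ¬ (q : ℤ) ∣ (p : ℤ) := by
    intro hd
    exact hq (Dvd.dvd.mul_left (Int.ofNat_dvd.mp hd) Δ)
  have hpu : IsUnit (p : ℤ_[q]) := by
    rw [PadicInt.isUnit_iff]
    have h1 := (@PadicInt.norm_int_lt_one_iff_dvd q _ (p : ℤ))
    have h2 : ‖((p : ℤ) : ℤ_[q])‖ ≤ 1 := PadicInt.norm_le_one _
    push_cast at h1 ⊢
    rcases lt_or_eq_of_le h2 with h | h
    · exact absurd (h1.mp (by push_cast at h ⊢; exact h)) hqp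
    · push_cast at h; exact h
  obtain ⟨u, hu⟩ := hpu
  have hv : (p : ℤ_[q]) * (↑u⁻¹ : ℤ_[q]) = 1 := by
    rw [← hu]; exact u.mul_inv
  have hp0 : (p : ℚ_[q]) ≠ 0 := Nat.cast_ne_zero.mpr hp.pos.ne'
  have hp0' : (p : ℤ_[q]) ≠ 0 := Nat.cast_ne_zero.mpr hp.pos.ne'
  have h20 : (2 : ℤ_[q]) ≠ 0 := two_ne_zero
  ext h
  simp only [SetLike.mem_coe, Set.mem_setOf_eq, RN]
  rw [mem_span_quad, mem_span_quad]
  constructor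
  · rintro ⟨A, B, C, D, rfl⟩
    constructor
    · refine ⟨A, B, C, D * q - C * c, ?_⟩
      ext <;> simp [QuaternionAlgebra.smul_mk] <;> push_cast <;> ring
    · refine ⟨ω * ((D : ℤ_[q]) - C * t) * (↑u⁻¹ : ℤ_[q]), ?_⟩
      have hvQ : (p : ℚ_[q]) * ((↑u⁻¹ : ℤ_[q]) : ℚ_[q]) = 1 := by exact_mod_cast congrArg (Subtype.val) hv
      have htQ : 2 * (c : ℚ_[q]) - ((p : ℚ_[q]) + (ω : ℚ_[q])) = 2 * q * ((t : ℤ_[q]) : ℚ_[q]) := by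
        have h5 := congrArg (Subtype.val) ht
        push_cast [show ((2 : ℤ_[q]) : ℚ_[q]) = 2 from rfl] at h5 ⊢
        linear_combination h5
      have hωQ : ((ω : ℤ_[q]) : ℚ_[q]) ^ 2 = (p : ℚ_[q]) := by exact_mod_cast congrArg (Subtype.val) hω
      simp [phi, toLoc]
      push_cast
      have h4 : (p : ℚ_[q]) * ((p : ℚ_[q]))⁻¹ = 1 := mul_inv_cancel₀ hp0
      have h5 : (2 : ℚ_[q]) * ((2 : ℚ_[q]))⁻¹ = 1 := mul_inv_cancel₀ two_ne_zero
      linear_combination (-(C*((p:ℚ_[q]))⁻¹*(ω:ℚ_[q]))/2) * htQ + (-(C*((p:ℚ_[q]))⁻¹)/2) * hωQ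
        + (-((q:ℚ_[q])*(ω:ℚ_[q])*((D:ℚ_[q]) - C*(t:ℤ_[q]))*((p:ℚ_[q]))⁻¹)) * hvQ
        + ((q:ℚ_[q])*(ω:ℚ_[q])*((D:ℚ_[q])-C*(t:ℤ_[q]))*((↑u⁻¹ : ℤ_[q]):ℚ_[q]) - C*((ω:ℚ_[q])+1)/2) * h4
        + ((C:ℚ_[q])/2 + C*(ω:ℚ_[q])/2) * h5
  · rintro ⟨⟨A, B, C, D, rfl⟩, z, hz⟩
    simp [phi, toLoc] at hz
    push_cast at hz
    have h4 : (p : ℚ_[q]) * ((p : ℚ_[q]))⁻¹ = 1 := mul_inv_cancel₀ hp0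
    have h5 : (2 : ℚ_[q]) * ((2 : ℚ_[q]))⁻¹ = 1 := mul_inv_cancel₀ two_ne_zero
    have key : (p : ℤ_[q]) * C + ((p : ℤ_[q]) * C + 2 * D) * ω = 2 * p * q * z :=
      Subtype.coe_injective (by
        push_cast [show ((2 : ℤ_[q]) : ℚ_[q]) = 2 from rfl]
        linear_combination (2 * (p : ℚ_[q])) * hz
          + (-(p : ℚ_[q]) * C * (1 + ((ω : ℤ_[q]) : ℚ_[q]))) * h5
          + (-(2 * (D : ℚ_[q]) * ((ω : ℤ_[q]) : ℚ_[q]))) * h4)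
    have k2 : (p : ℤ_[q]) * ((C : ℤ_[q]) * ω + p * C + 2 * D) = (p : ℤ_[q]) * (2 * q * z * ω) := by
      linear_combination ω * key - ((p : ℤ_[q]) * C + 2 * D) * hω
    have k3 := mul_left_cancel₀ hp0' k2
    have k4 : (2 : ℤ_[q]) * ((c : ℤ_[q]) * C + D) = (2 : ℤ_[q]) * (q * (z * ω + C * t)) := by
      linear_combination k3 + (C : ℤ_[q]) * ht
    have k5 := mul_left_cancel₀ h20 k4
    have hdvd : (q : ℤ) ∣ c * C + D := by
      rw [← PadicInt.norm_int_lt_one_iff_dvd, PadicInt.norm_lt_one_iff_dvd]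
      refine ⟨z * ω + C * t, ?_⟩
      push_cast
      linear_combination k5
    obtain ⟨E, hE⟩ := hdvd
    have hDEQ : (D : ℚ) = q * E - c * C := by
      have h6 := congrArg (fun x : ℤ => (x : ℚ)) hE
      push_cast at h6
      linarith
    refine ⟨A, B, C, E, ?_⟩
    ext
    · simp [QuaternionAlgebra.smul_mk]
    · simp [QuaternionAlgebra.smul_mk]
    · simp [QuaternionAlgebra.smul_mk]; push_cast; linear_combination ((a : ℚ) * Δ * N / p) * hDEQ
    · simp [QuaternionAlgebra.smul_mk]; push_cast; linear_combination (1 / (p : ℚ)) * hDEQ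
end
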